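/- arXiv:1809.07167 — 4 statements merged into one kernel-verified Lean document; each statement's English description precedes it below -/
import Mathlib

section
/- Let w = a + bζ₈ + cζ₈² + dζ₈³ ∈ ℤ[ζ₈] be odd (i.e., coprime to 2), and set u = a²+b²+c²+d², v = ab - ad + bc + cd. Then the norm N(w) from ℚ(ζ₈) to ℚ equals u² - 2v², u is odd, and v is even. -/
open NumberField

instance : NumberField (CyclotomicField 8 ℚ) :=
  inferInstance

set_option maxHeartbeats 1000000 in
lemma norm_formula (ζ : 𝓞 (CyclotomicField 8 ℚ)) (hζ : IsPrimitiveRoot ζ 8)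
    (a b c d : ℤ) :
    Algebra.norm ℤ ((a : 𝓞 (CyclotomicField 8 ℚ)) + b * ζ + c * ζ ^ 2 + d * ζ ^ 3) =
      (a ^ 2 + b ^ 2 + c ^ 2 + d ^ 2) ^ 2 - 2 * (a * b - a * d + b * c + c * d) ^ 2 := by
  set K := CyclotomicField 8 ℚ
  set x : 𝓞 K := (a : 𝓞 K) + b * ζ + c * ζ ^ 2 + d * ζ ^ 3 with hx
  set z : K := algebraMap (𝓞 K) K ζ with hz
  have hζ' : IsPrimitiveRoot z 8 := hζ.map_of_injective RingOfIntegers.coe_injective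
  haveI hcyc : IsCyclotomicExtension {8} ℚ K := CyclotomicField.isCyclotomicExtension 8 ℚ
  haveI : IsGalois ℚ K := IsCyclotomicExtension.isGalois {8} ℚ K
  have hirr : Irreducible (Polynomial.cyclotomic 8 ℚ) :=
    Polynomial.cyclotomic.irreducible_rat (by norm_num)
  have hxK : (x : K) = (a : K) + b * z + c * z ^ 2 + d * z ^ 3 := by
    rw [hx]; push_cast; rfl
  have h4 : z ^ 4 = -1 := by
    have := (hζ'.pow (by norm_num : 0 < 8) (by norm_num : 8 = 4 * 2))
    exact this.eq_neg_one_of_two_right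
  -- the map to exponents
  have hbij : Function.Bijective (hζ'.autToPow ℚ) := by
    rw [Fintype.bijective_iff_injective_and_card]
    refine ⟨IsPrimitiveRoot.autToPow_injective (n := 8) (K := ℚ) (hμ := hζ'), ?_⟩
    rw [← Nat.card_eq_fintype_card, IsGalois.card_aut_eq_finrank, IsCyclotomicExtension.finrank (n := 8) K hirr,
      ZMod.card_units_eq_totient]
  have key : algebraMap ℚ K (Algebra.norm ℚ (x : K)) =
      algebraMap ℚ K (((a ^ 2 + b ^ 2 + c ^ 2 + d ^ 2) ^ 2
        - 2 * (a * b - a * d + b * c + c * d) ^ 2 : ℤ) : ℚ) := by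
    rw [Algebra.norm_eq_prod_automorphisms, map_intCast]
    rw [Fintype.prod_bijective (hζ'.autToPow ℚ) hbij _
      (fun t : (ZMod 8)ˣ => (a : K) + b * z ^ (t : ZMod 8).val
        + c * (z ^ (t : ZMod 8).val) ^ 2 + d * (z ^ (t : ZMod 8).val) ^ 3)
      (fun σ => by
        rw [hxK]
        simp only [map_add, map_mul, map_pow, map_intCast (f := σ), hζ'.autToPow_spec ℚ σ])]
    have huniv : (Finset.univ : Finset (ZMod 8)ˣ) =
        {(1 : (ZMod 8)ˣ), ⟨3, 3, by decide, by decide⟩, ⟨5, 5, by decide, by decide⟩,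
          ⟨7, 7, by decide, by decide⟩} := by decide
    rw [huniv]
    rw [Finset.prod_insert (by decide), Finset.prod_insert (by decide),
      Finset.prod_insert (by decide), Finset.prod_singleton]
    have e1 : (((1 : (ZMod 8)ˣ) : ZMod 8)).val = 1 := rfl
    have e3 : (((⟨3, 3, by decide, by decide⟩ : (ZMod 8)ˣ) : ZMod 8)).val = 3 := rfl
    have e5 : (((⟨5, 5, by decide, by decide⟩ : (ZMod 8)ˣ) : ZMod 8)).val = 5 := rfl
    have e7 : (((⟨7, 7, by decide, by decide⟩ : (ZMod 8)ˣ) : ZMod 8)).val = 7 := rfl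
    rw [e1, e3, e5, e7]
    push_cast
    have hf3 : (a : K) + b * z ^ 3 + c * (z ^ 3) ^ 2 + d * (z ^ 3) ^ 3
        = a + d * z - c * z ^ 2 + b * z ^ 3 := by
      linear_combination (c * z ^ 2 + d * z ^ 5 - d * z) * h4
    have hf5 : (a : K) + b * z ^ 5 + c * (z ^ 5) ^ 2 + d * (z ^ 5) ^ 3
        = a - b * z + c * z ^ 2 - d * z ^ 3 := by
      linear_combination (b * z + c * z ^ 6 - c * z ^ 2 + d * z ^ 11 - d * z ^ 7 + d * z ^ 3) * h4
    have hf7 : (a : K) + b * z ^ 7 + c * (z ^ 7) ^ 2 + d * (z ^ 7) ^ 3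
        = a - d * z - c * z ^ 2 - b * z ^ 3 := by
      linear_combination (b * z ^ 3 + c * z ^ 10 - c * z ^ 6 + c * z ^ 2
        + d * z ^ 17 - d * z ^ 13 + d * z ^ 9 - d * z ^ 5 + d * z) * h4
    rw [pow_one, hf3, hf5, hf7]
    rw [Int.cast_mul, Int.cast_mul, Int.cast_mul, Int.cast_mul]
    linear_combination (-1*d^4 - 1*c^4 + 4*b*c^2*d - 2*b^2*d^2 - 1*b^4 - 4*a*c*d^2 + 4*a*b^2*c
      - 2*a^2*c^2 - 4*a^2*b*d - 1*a^2*d^2*z^2 - 1*a^2*b^2*z^2 + d^4*z^4 + c^4*z^4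
      - 4*b*c^2*d*z^4 + 3*b^2*d^2*z^4 + b^4*z^4 + 2*a*c*d^2*z^4 - 2*a*b^2*c*z^4
      - 1*c^2*d^2*z^6 + 2*b*d^3*z^6 - 1*b^2*c^2*z^6 + 2*b^3*d*z^6 + b^2*d^2*z^8) * h4
  have h2 : Algebra.norm ℚ (x : K) = (((a ^ 2 + b ^ 2 + c ^ 2 + d ^ 2) ^ 2
      - 2 * (a * b - a * d + b * c + c * d) ^ 2 : ℤ) : ℚ) :=
    (algebraMap ℚ K).injective key
  have h3 := Algebra.coe_norm_int x
  rw [h2] at h3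
  exact_mod_cast h3

/-- For odd `w = a + bζ₈ + cζ₈² + dζ₈³ ∈ ℤ[ζ₈]`, with `u = a²+b²+c²+d²` and
`v = ab - ad + bc + cd`, the norm of `w` equals `u² - 2v²`, `u` is odd and `v` is even. -/
theorem stmt_2 (ζ : 𝓞 (CyclotomicField 8 ℚ)) (hζ : IsPrimitiveRoot ζ 8)
    (a b c d : ℤ)
    (w : 𝓞 (CyclotomicField 8 ℚ))
    (hw : w = (a : 𝓞 (CyclotomicField 8 ℚ)) + b * ζ + c * ζ ^ 2 + d * ζ ^ 3)
    (hodd : IsCoprime w 2) :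
    Algebra.norm ℤ w =
        (a ^ 2 + b ^ 2 + c ^ 2 + d ^ 2) ^ 2 - 2 * (a * b - a * d + b * c + c * d) ^ 2 ∧
      Odd (a ^ 2 + b ^ 2 + c ^ 2 + d ^ 2) ∧
      Even (a * b - a * d + b * c + c * d) := by
  have h4 : ζ ^ 4 = -1 := by
    have := (hζ.pow (by norm_num : 0 < 8) (by norm_num : 8 = 4 * 2))
    exact this.eq_neg_one_of_two_right
  have hd2 : (ζ - 1) ∣ 2 := ⟨-(ζ ^ 3 + ζ ^ 2 + ζ + 1), by linear_combination h4⟩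
  have hsum : ¬ Even (a + b + c + d) := by
    intro hev
    obtain ⟨m, hm⟩ := hev
    have hdw : (ζ - 1) ∣ w := by
      have hw2 : w = (ζ - 1) * ((b : 𝓞 (CyclotomicField 8 ℚ)) + c * (ζ + 1)
          + d * (ζ ^ 2 + ζ + 1)) + (m : 𝓞 (CyclotomicField 8 ℚ)) * 2 := by
        rw [hw]
        have : ((a : ℤ) : 𝓞 (CyclotomicField 8 ℚ)) + b + c + d
            = (m : 𝓞 (CyclotomicField 8 ℚ)) * 2 := by
          rw [show ((a : ℤ) : 𝓞 (CyclotomicField 8 ℚ)) + b + c + d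
              = (((a + b + c + d : ℤ)) : 𝓞 (CyclotomicField 8 ℚ)) by push_cast; ring, hm]
          push_cast; ring
        linear_combination this
      rw [hw2]
      exact dvd_add (Dvd.intro _ rfl) (Dvd.dvd.mul_left hd2 _)
    have hu : IsUnit (ζ - 1) := hodd.isUnit_of_dvd' hdw hd2
    have hnu : IsUnit (Algebra.norm ℤ (ζ - 1)) := hu.map (Algebra.norm ℤ)
    have : Algebra.norm ℤ (ζ - 1) = 2 := by
      have := norm_formula ζ hζ (-1) 1 0 0
      norm_num at this
      rw [show ζ - 1 = -1 + ζ by ring]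
      exact_mod_cast this
    rw [this] at hnu
    rw [Int.isUnit_iff] at hnu
    omega
  have hOu : Odd (a ^ 2 + b ^ 2 + c ^ 2 + d ^ 2) := by
    simp only [← Int.not_even_iff_odd, Int.even_add, Int.even_pow] at hsum ⊢
    tauto
  refine ⟨?_, hOu, ?_⟩
  · rw [hw]; exact norm_formula ζ hζ a b c d
  · simp only [Int.even_add, Int.even_sub, Int.even_mul] at hsum ⊢
    tauto
end

section
/- Let a, b, c, d ∈ ℤ and let v₁ be a positive odd divisor of v = ab - ad + bc + cd with gcd(v₁, b - d) = 1. Then (a²+b²+c²+d²)·(b-d)² ≡ (b²+d²)·(2c²+(b-d)²) (mod v₁), and hence the Jacobi symbols satisfy ((a²+b²+c²+d²)/v₁) = ((b²+d²)(2c²+(b-d)²)/v₁). -/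
/-- If `v₁` is a positive odd divisor of `v = ab - ad + bc + cd` coprime to `b - d`, then
`(a²+b²+c²+d²)(b-d)² ≡ (b²+d²)(2c²+(b-d)²) (mod v₁)`, and hence the corresponding
Jacobi symbols agree. -/
theorem stmt_7 (a b c d : ℤ) (v₁ : ℕ) (hv₁ : 0 < v₁) (hodd : Odd v₁)
    (hdvd : (v₁ : ℤ) ∣ (a * b - a * d + b * c + c * d))
    (hcop : IsCoprime (v₁ : ℤ) (b - d)) :
    (a ^ 2 + b ^ 2 + c ^ 2 + d ^ 2) * (b - d) ^ 2 ≡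
        (b ^ 2 + d ^ 2) * (2 * c ^ 2 + (b - d) ^ 2) [ZMOD (v₁ : ℤ)] ∧
      jacobiSym (a ^ 2 + b ^ 2 + c ^ 2 + d ^ 2) v₁ =
        jacobiSym ((b ^ 2 + d ^ 2) * (2 * c ^ 2 + (b - d) ^ 2)) v₁ := by
  have hmod : (a ^ 2 + b ^ 2 + c ^ 2 + d ^ 2) * (b - d) ^ 2 ≡
      (b ^ 2 + d ^ 2) * (2 * c ^ 2 + (b - d) ^ 2) [ZMOD (v₁ : ℤ)] := by
    rw [Int.modEq_iff_dvd]
    have : (b ^ 2 + d ^ 2) * (2 * c ^ 2 + (b - d) ^ 2) -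
        (a ^ 2 + b ^ 2 + c ^ 2 + d ^ 2) * (b - d) ^ 2 =
        (a * b - a * d + b * c + c * d) * (c * (b + d) - a * (b - d)) := by ring
    rw [this]
    exact Dvd.dvd.mul_right hdvd _
  refine ⟨hmod, ?_⟩
  have hgcd : (b - d).gcd v₁ = 1 := by
    rw [Int.gcd_comm]
    exact Int.isCoprime_iff_gcd_eq_one.mp hcop
  calc jacobiSym (a ^ 2 + b ^ 2 + c ^ 2 + d ^ 2) v₁
      = jacobiSym ((a ^ 2 + b ^ 2 + c ^ 2 + d ^ 2) * (b - d) ^ 2) v₁ := by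
        rw [jacobiSym.mul_left, jacobiSym.sq_one' hgcd, mul_one]
    _ = jacobiSym ((b ^ 2 + d ^ 2) * (2 * c ^ 2 + (b - d) ^ 2)) v₁ :=
        jacobiSym.mod_left' hmod
end

section
/- Let α, β ∈ ℤ[i] be odd Gaussian integers (coprime to 1+i) with coprime norms, and suppose q := N(α) and r := N(β) are distinct odd rational primes with q ≡ r ≡ 1 (mod 4). Then the quadratic residue symbol in ℤ[i] satisfies (α/β)_{2,ℚ(i)} · (β/α)_{2,ℚ(i)} = 1 whenever α, β are primary (≡ 1 mod (1+i)³). [Quadratic reciprocity in ℤ[i] for primary elements.] -/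
open Zsqrtd

private lemma euler_dvd (p : ℕ) [Fact p.Prime] (hp : p % 2 = 1) (a : ℤ) :
    (p : ℤ) ∣ a ^ ((p - 1) / 2) - legendreSym p a := by
  have h := legendreSym.eq_pow p a
  have hdiv : p / 2 = (p - 1) / 2 := by omega
  rw [← ZMod.intCast_zmod_eq_zero_iff_dvd]
  push_cast
  rw [← hdiv, ← h]
  ring

private lemma fermat_dvd (p : ℕ) [Fact p.Prime] (a : ℤ) (ha : ¬ (p : ℤ) ∣ a) :
    (p : ℤ) ∣ a ^ (p - 1) - 1 := by
  have ha' : (a : ZMod p) ≠ 0 := by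
    rwa [Ne, ZMod.intCast_zmod_eq_zero_iff_dvd]
  have h := ZMod.pow_card_sub_one_eq_one ha'
  rw [← ZMod.intCast_zmod_eq_zero_iff_dvd]
  push_cast
  rw [h]
  ring

private lemma not_dvd_of_sq_add_sq (p : ℕ) (hp : p.Prime) (u v : ℤ)
    (h : u ^ 2 + v ^ 2 = p) : ¬ (p : ℤ) ∣ u := by
  intro hd
  have hv2 : (p : ℤ) ∣ v ^ 2 := by
    have : v ^ 2 = (p : ℤ) - u ^ 2 := by linarith
    rw [this]
    exact dvd_sub dvd_rfl (dvd_pow hd two_ne_zero)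
  have hv : (p : ℤ) ∣ v := Int.Prime.dvd_pow' hp hv2
  have hsq : (p : ℤ) ^ 2 ∣ (p : ℤ) := by
    have : (p : ℤ) ^ 2 ∣ u ^ 2 + v ^ 2 :=
      dvd_add (pow_dvd_pow_of_dvd hd 2) (pow_dvd_pow_of_dvd hv 2)
    rwa [h] at this
  have hp2 : (2 : ℤ) ≤ p := by exact_mod_cast hp.two_le
  have := Int.le_of_dvd (by positivity) hsq
  nlinarith

private lemma gcd_of_sq_add_sq (p : ℕ) (hp : p.Prime) (u v : ℤ)
    (h : u ^ 2 + v ^ 2 = p) : Int.gcd u v = 1 := by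
  by_contra hg
  obtain ⟨t, ht, htd⟩ := Nat.exists_prime_and_dvd hg
  have hu : (t : ℤ) ∣ u := dvd_trans (Int.natCast_dvd_natCast.mpr htd) (Int.gcd_dvd_left _ _)
  have hv : (t : ℤ) ∣ v := dvd_trans (Int.natCast_dvd_natCast.mpr htd) (Int.gcd_dvd_right _ _)
  have hsq : ((t : ℤ)) ^ 2 ∣ (p : ℤ) := by
    have : ((t : ℤ)) ^ 2 ∣ u ^ 2 + v ^ 2 :=
      dvd_add (pow_dvd_pow_of_dvd hu 2) (pow_dvd_pow_of_dvd hv 2)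
    rwa [h] at this
  have hsqn : t ^ 2 ∣ p := by exact_mod_cast hsq
  have htp : t ∣ p := dvd_trans (dvd_pow_self t two_ne_zero) hsqn
  have : t = p := ((Nat.Prime.eq_one_or_self_of_dvd hp t htp).resolve_left ht.one_lt.ne')
  subst this
  have := Nat.le_of_dvd hp.pos hsqn
  nlinarith [hp.two_le]

private lemma jac_one (n : ℕ) (hn4 : n % 4 = 1) (C D : ℤ) (hC : C % 2 = 1)
    (hcop : Int.gcd C D = 1) (h : (n : ℤ) = C ^ 2 + D ^ 2) :
    jacobiSym C n = 1 := by
  have hnodd : Odd n := Nat.odd_iff.mpr (by omega)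
  have hCodd : Odd C.natAbs := by
    rw [Int.natAbs_odd]
    exact Int.odd_iff.mpr hC
  have hgcdDC : Int.gcd D (C.natAbs : ℤ) = 1 := by
    have : Int.gcd D C = 1 := by rwa [Int.gcd_comm] at hcop
    simpa [Int.gcd, Int.natAbs_natCast, Int.natAbs_abs] using this
  have key : jacobiSym (n : ℤ) C.natAbs = 1 := by
    have hmod : (n : ℤ) % (C.natAbs : ℤ) = (D ^ 2) % (C.natAbs : ℤ) := by
      have hdvd : ((C.natAbs : ℤ)) ∣ D ^ 2 - (n : ℤ) := by
        rw [h]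
        have h2 : D ^ 2 - (C ^ 2 + D ^ 2) = -C ^ 2 := by ring
        rw [h2]
        exact (dvd_pow (Int.natAbs_dvd.mpr dvd_rfl) two_ne_zero).neg_right
      exact Int.modEq_iff_dvd.mpr hdvd
    rw [jacobiSym.mod_left' hmod]
    exact jacobiSym.sq_one' hgcdDC
  have hrec := jacobiSym.quadratic_reciprocity_one_mod_four hn4 hCodd
  have h2 : jacobiSym ((C.natAbs : ℕ) : ℤ) n = 1 := by rw [← hrec]; exact key
  rcases le_or_gt 0 C with hpos | hneg
  · rwa [Int.natAbs_of_nonneg hpos] at h2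
  · have hCabs : ((C.natAbs : ℕ) : ℤ) = -C := by omega
    rw [hCabs] at h2
    have hneg1 : jacobiSym (-1) n = 1 := by
      rw [jacobiSym.at_neg_one hnodd, ZMod.χ₄_nat_one_mod_four hn4]
    have : jacobiSym (-C) n = jacobiSym (-1) n * jacobiSym C n := by
      rw [← jacobiSym.mul_left]; ring_nf
    rw [this, hneg1, one_mul] at h2
    exact h2

private lemma side_dvd (p : ℕ) [Fact p.Prime] (hp4 : p % 4 = 1) (u C : ℤ)
    (β δ : GaussianInt) (hβp : β ∣ (p : GaussianInt))
    (hu1 : legendreSym p u = 1) (hu0 : ¬ (p : ℤ) ∣ u)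
    (hdvd : β ∣ (u : GaussianInt) * δ - (C : GaussianInt)) :
    β ∣ δ ^ ((p - 1) / 2) - ((legendreSym p C : ℤ) : GaussianInt) := by
  have hpp : p.Prime := Fact.out
  have hpodd : p % 2 = 1 := by omega
  set m := (p - 1) / 2 with hm
  have h2m : 2 * m = p - 1 := by omega
  -- β divides casts of integer multiples of p
  have hcast : ∀ z : ℤ, (p : ℤ) ∣ z → β ∣ ((z : ℤ) : GaussianInt) := by
    intro z hz
    refine dvd_trans hβp ?_
    have := map_dvd (Int.castRingHom GaussianInt) hz
    simpa using this
  -- fact 1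
  have h1 : β ∣ ((u : GaussianInt) * δ) ^ m - (C : GaussianInt) ^ m :=
    dvd_trans hdvd (sub_dvd_pow_sub_pow _ _ m)
  -- integer facts
  have hf : (p : ℤ) ∣ u ^ (p - 1) - 1 := fermat_dvd p u hu0
  have he : (p : ℤ) ∣ u ^ m * C ^ m - legendreSym p C := by
    obtain ⟨k, hk⟩ := euler_dvd p hpodd u
    obtain ⟨l, hl⟩ := euler_dvd p hpodd C
    refine ⟨C ^ m * k + l, ?_⟩
    have hk' : u ^ m = (p : ℤ) * k + legendreSym p u := by linarith
    have hl' : C ^ m = (p : ℤ) * l + legendreSym p C := by linarith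
    rw [hk', hl', hu1]
    ring
  have hf' : β ∣ (u : GaussianInt) ^ (p - 1) - 1 := by
    have := hcast _ hf
    push_cast at this
    convert this using 2
  have he' : β ∣ (u : GaussianInt) ^ m * (C : GaussianInt) ^ m
      - ((legendreSym p C : ℤ) : GaussianInt) := by
    have := hcast _ he
    push_cast at this
    convert this using 2
  have hiden : δ ^ m - ((legendreSym p C : ℤ) : GaussianInt) =
      δ ^ m * (1 - (u : GaussianInt) ^ (p - 1))
      + (u : GaussianInt) ^ m * (((u : GaussianInt) * δ) ^ m - (C : GaussianInt) ^ m)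
      + ((u : GaussianInt) ^ m * (C : GaussianInt) ^ m
          - ((legendreSym p C : ℤ) : GaussianInt)) := by
    have hup : (u : GaussianInt) ^ (p - 1) = ((u : GaussianInt) ^ m) ^ 2 := by
      rw [← pow_mul]
      congr 1
      omega
    rw [hup]
    ring
  rw [hiden]
  have hterm1 : β ∣ δ ^ m * (1 - (u : GaussianInt) ^ (p - 1)) :=
    Dvd.dvd.mul_left (dvd_sub_comm.mp hf') _
  exact dvd_add (dvd_add hterm1 (Dvd.dvd.mul_left h1 _)) he'

private lemma primary_parity (γ : GaussianInt)
    (h : ((1 : GaussianInt) + sqrtd) ^ 3 ∣ (γ - 1)) :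
    γ.re % 2 = 1 ∧ γ.im % 2 = 0 := by
  obtain ⟨c, hc⟩ := h
  have h1 := congrArg Zsqrtd.re hc
  have h2 := congrArg Zsqrtd.im hc
  simp [pow_succ, Zsqrtd.re_mul, Zsqrtd.im_mul, Zsqrtd.re_add, Zsqrtd.im_add,
    Zsqrtd.re_sub, Zsqrtd.im_sub, Zsqrtd.re_one, Zsqrtd.im_one,
    Zsqrtd.re_sqrtd, Zsqrtd.im_sqrtd] at h1 h2
  constructor <;> omega

/-- Quadratic reciprocity in `ℤ[i]` for primary elements of distinct prime norms
`q ≡ r ≡ 1 (mod 4)`: the quadratic residue symbols (defined via Euler's criterion)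
satisfy `(α/β)(β/α) = 1`. -/
theorem stmt_15 (α β : GaussianInt) (q r : ℕ) (hq : q.Prime) (hr : r.Prime)
    (hqr : q ≠ r) (hq4 : q % 4 = 1) (hr4 : r % 4 = 1)
    (hNα : α.norm = q) (hNβ : β.norm = r)
    (hαprimary : ((1 : GaussianInt) + sqrtd) ^ 3 ∣ (α - 1))
    (hβprimary : ((1 : GaussianInt) + sqrtd) ^ 3 ∣ (β - 1)) :
    ∃ s t : ℤ, (s = 1 ∨ s = -1) ∧ (t = 1 ∨ t = -1) ∧
      β ∣ (α ^ ((r - 1) / 2) - (s : GaussianInt)) ∧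
      α ∣ (β ^ ((q - 1) / 2) - (t : GaussianInt)) ∧
      s * t = 1 := by
  haveI := Fact.mk hq
  haveI := Fact.mk hr
  haveI : NeZero q := ⟨hq.pos.ne'⟩
  haveI : NeZero r := ⟨hr.pos.ne'⟩
  obtain ⟨hxodd, hyeven⟩ := primary_parity α hαprimary
  obtain ⟨huodd, hveven⟩ := primary_parity β hβprimary
  set x := α.re with hx
  set y := α.im with hy
  set u := β.re with hu
  set v := β.im with hv
  have hqx : x ^ 2 + y ^ 2 = (q : ℤ) := by
    rw [Zsqrtd.norm_def] at hNα
    linear_combination hNα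
  have hru : u ^ 2 + v ^ 2 = (r : ℤ) := by
    rw [Zsqrtd.norm_def] at hNβ
    linear_combination hNβ
  set C := x * u + y * v with hC
  set D := x * v - y * u with hD
  have hCD : C ^ 2 + D ^ 2 = (q : ℤ) * r := by
    rw [hC, hD]
    linear_combination (u ^ 2 + v ^ 2) * hqx + (q : ℤ) * hru
  have hCodd : C % 2 = 1 := by
    have h1 : Odd (x * u) := (Int.odd_iff.mpr hxodd).mul (Int.odd_iff.mpr huodd)
    have h2 : Even (y * v) := (Int.even_iff.mpr hyeven).mul_right v
    exact Int.odd_iff.mp (by rw [hC]; exact h1.add_even h2)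
  have hqrne : ¬ (q : ℤ) ∣ (r : ℤ) := by
    rw [Int.natCast_dvd_natCast]
    intro hh
    rcases (Nat.Prime.eq_one_or_self_of_dvd hr q hh) with h1 | h1
    · exact hq.one_lt.ne' h1
    · exact hqr h1
  have hrqne : ¬ (r : ℤ) ∣ (q : ℤ) := by
    rw [Int.natCast_dvd_natCast]
    intro hh
    rcases (Nat.Prime.eq_one_or_self_of_dvd hq r hh) with h1 | h1
    · exact hr.one_lt.ne' h1
    · exact hqr h1.symm
  have hgcd : Int.gcd C D = 1 := by
    by_contra hg
    obtain ⟨t, ht, htd⟩ := Nat.exists_prime_and_dvd hg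
    have hCt : (t : ℤ) ∣ C := dvd_trans (Int.natCast_dvd_natCast.mpr htd) (Int.gcd_dvd_left _ _)
    have hDt : (t : ℤ) ∣ D := dvd_trans (Int.natCast_dvd_natCast.mpr htd) (Int.gcd_dvd_right _ _)
    have hqr' : (t : ℤ) ∣ ((q * r : ℕ) : ℤ) := by
      push_cast
      rw [← hCD]
      exact dvd_add (dvd_pow hCt two_ne_zero) (dvd_pow hDt two_ne_zero)
    have htqr : t ∣ q * r := Int.natCast_dvd_natCast.mp hqr'
    rcases (Nat.Prime.dvd_mul ht).mp htqr with htq | htr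
    · have hteq : t = q := (Nat.Prime.eq_one_or_self_of_dvd hq t htq).resolve_left ht.one_lt.ne'
      subst hteq
      have h1 : (t : ℤ) ∣ x * r := by
        have he : u * C + v * D = x * r := by rw [hC, hD]; linear_combination x * hru
        rw [← he]
        exact dvd_add (hCt.mul_left u) (hDt.mul_left v)
      have h2 : (t : ℤ) ∣ y * r := by
        have he : v * C - u * D = y * r := by rw [hC, hD]; linear_combination y * hru
        rw [← he]
        exact dvd_sub (hCt.mul_left v) (hDt.mul_left u)
      have hx' : (t : ℤ) ∣ x := (Int.Prime.dvd_mul' hq h1).resolve_right hqrne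
      have hy' : (t : ℤ) ∣ y := (Int.Prime.dvd_mul' hq h2).resolve_right hqrne
      have hsq : (t : ℤ) ^ 2 ∣ (t : ℤ) := by
        have : (t : ℤ) ^ 2 ∣ x ^ 2 + y ^ 2 :=
          dvd_add (pow_dvd_pow_of_dvd hx' 2) (pow_dvd_pow_of_dvd hy' 2)
        rwa [hqx] at this
      have := Int.le_of_dvd (by exact_mod_cast hq.pos) hsq
      have h2' : (2 : ℤ) ≤ t := by exact_mod_cast hq.two_le
      nlinarith
    · have hteq : t = r := (Nat.Prime.eq_one_or_self_of_dvd hr t htr).resolve_left ht.one_lt.ne'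
      subst hteq
      have h1 : (t : ℤ) ∣ u * q := by
        have he : x * C - y * D = u * q := by rw [hC, hD]; linear_combination u * hqx
        rw [← he]
        exact dvd_sub (hCt.mul_left x) (hDt.mul_left y)
      have h2 : (t : ℤ) ∣ v * q := by
        have he : y * C + x * D = v * q := by rw [hC, hD]; linear_combination v * hqx
        rw [← he]
        exact dvd_add (hCt.mul_left y) (hDt.mul_left x)
      have hu' : (t : ℤ) ∣ u := (Int.Prime.dvd_mul' hr h1).resolve_right hrqne
      have hv' : (t : ℤ) ∣ v := (Int.Prime.dvd_mul' hr h2).resolve_right hrqne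
      have hsq : (t : ℤ) ^ 2 ∣ (t : ℤ) := by
        have : (t : ℤ) ^ 2 ∣ u ^ 2 + v ^ 2 :=
          dvd_add (pow_dvd_pow_of_dvd hu' 2) (pow_dvd_pow_of_dvd hv' 2)
        rwa [hru] at this
      have := Int.le_of_dvd (by exact_mod_cast hr.pos) hsq
      have h2' : (2 : ℤ) ≤ t := by exact_mod_cast hr.two_le
      nlinarith
  have hqr4 : (q * r) % 4 = 1 := by rw [Nat.mul_mod, hq4, hr4]
  have hJ : jacobiSym C (q * r) = 1 := by
    apply jac_one (q * r) hqr4 C D hCodd hgcd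
    push_cast
    linear_combination -hCD
  have hsplit : jacobiSym C (q * r) = legendreSym q C * legendreSym r C := by
    rw [jacobiSym.mul_right, jacobiSym.legendreSym.to_jacobiSym, jacobiSym.legendreSym.to_jacobiSym]
  have hst : legendreSym r C * legendreSym q C = 1 := by
    rw [hsplit] at hJ
    rw [mul_comm]
    exact hJ
  have hlegu : legendreSym r u = 1 := by
    rw [jacobiSym.legendreSym.to_jacobiSym]
    exact jac_one r hr4 u v huodd (gcd_of_sq_add_sq r hr u v hru) hru.symm
  have hlegx : legendreSym q x = 1 := by
    rw [jacobiSym.legendreSym.to_jacobiSym]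
    exact jac_one q hq4 x y hxodd (gcd_of_sq_add_sq q hq x y hqx) hqx.symm
  have hβr : β ∣ ((r : ℕ) : GaussianInt) := by
    have hme := Zsqrtd.norm_eq_mul_conj β
    rw [hNβ] at hme
    exact ⟨star β, by exact_mod_cast hme⟩
  have hαq : α ∣ ((q : ℕ) : GaussianInt) := by
    have hme := Zsqrtd.norm_eq_mul_conj α
    rw [hNα] at hme
    exact ⟨star α, by exact_mod_cast hme⟩
  have hdvd1 : β ∣ (u : GaussianInt) * α - (C : GaussianInt) := by
    refine ⟨⟨0, y⟩, ?_⟩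
    refine Zsqrtd.ext ?_ ?_ <;>
      simp [Zsqrtd.re_mul, Zsqrtd.im_mul, Zsqrtd.re_sub, Zsqrtd.im_sub,
        Zsqrtd.re_intCast, Zsqrtd.im_intCast, hC] <;> ring
  have hdvd2 : α ∣ (x : GaussianInt) * β - (C : GaussianInt) := by
    refine ⟨⟨0, v⟩, ?_⟩
    refine Zsqrtd.ext ?_ ?_ <;>
      simp [Zsqrtd.re_mul, Zsqrtd.im_mul, Zsqrtd.re_sub, Zsqrtd.im_sub,
        Zsqrtd.re_intCast, Zsqrtd.im_intCast, hC] <;> ring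
  have hs := side_dvd r hr4 u C β α hβr hlegu (not_dvd_of_sq_add_sq r hr u v hru) hdvd1
  have ht := side_dvd q hq4 x C α β hαq hlegx (not_dvd_of_sq_add_sq q hq x y hqx) hdvd2
  refine ⟨legendreSym r C, legendreSym q C, ?_, ?_, hs, ht, hst⟩
  · exact Int.isUnit_iff.mp (IsUnit.of_mul_eq_one _ hst)
  · exact Int.isUnit_iff.mp (IsUnit.of_mul_eq_one _ (by rw [mul_comm]; exact hst))
end

section
/- Let p ≡ 1 (mod 8) be prime. Then there exist positive integers g, h with p = 2g² - h². -/
set_option maxHeartbeats 1000000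

instance : Zsqrtd.Nonsquare 2 := ⟨fun n h => by
  rcases Nat.lt_or_ge n 2 with h2 | h2
  · interval_cases n <;> omega
  · nlinarith⟩

lemma aux_sq_eq_two_sq {A B : ℤ} (h : A ^ 2 = 2 * B ^ 2) : A = 0 ∧ B = 0 := by
  have : A * A = (2 : ℕ) * B * B := by push_cast; ring_nf; nlinarith
  exact Zsqrtd.divides_sq_eq_zero_z this

/-- If `p ≡ 1 (mod 8)` is prime, then there are positive integers `g, h` with
`p = 2g² - h²`. -/
theorem stmt_19 (p : ℕ) (hp : p.Prime) (h8 : p % 8 = 1) :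
    ∃ g h : ℤ, 0 < g ∧ 0 < h ∧ (p : ℤ) = 2 * g ^ 2 - h ^ 2 := by
  haveI : Fact p.Prime := ⟨hp⟩
  have hp2 : p ≠ 2 := by omega
  obtain ⟨x, hx⟩ : IsSquare (2 : ZMod p) :=
    (ZMod.exists_sq_eq_two_iff hp2).mpr (Or.inl h8)
  set r := Nat.sqrt p with hr
  have hrle : r * r ≤ p := by simpa [pow_two] using Nat.sqrt_le' p
  have hrp : r * r < p := by
    rcases Nat.lt_or_ge (r * r) p with h | h
    · exact h
    · exfalso
      have he : r * r = p := le_antisymm hrle (by omega)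
      have hd : r ∣ p := ⟨r, he.symm⟩
      rcases Nat.Prime.eq_one_or_self_of_dvd hp r hd with h1 | h1 <;> nlinarith [hp.two_le]
  have hpr : p < (r + 1) * (r + 1) := by simpa [pow_two] using Nat.lt_succ_sqrt' p
  clear_value r
  have hcard : Fintype.card (ZMod p) <
      ((Finset.range (r+1)) ×ˢ (Finset.range (r+1))).card := by
    rw [Finset.card_product, Finset.card_range, ZMod.card]
    exact hpr
  obtain ⟨⟨a₁, b₁⟩, hm1, ⟨a₂, b₂⟩, hm2, hne, heq⟩ :=
    Finset.exists_ne_map_eq_of_card_lt_of_maps_to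
      (s := (Finset.range (r+1)) ×ˢ (Finset.range (r+1))) (t := Finset.univ)
      (by simpa using hcard)
      (fun q _ => Finset.mem_univ ((q.1 : ZMod p) + x * (q.2 : ZMod p)))
  simp only [Finset.mem_product, Finset.mem_range] at hm1 hm2
  obtain ⟨ha₁, hb₁⟩ := hm1
  obtain ⟨ha₂, hb₂⟩ := hm2
  set A : ℤ := (a₁ : ℤ) - a₂ with hA
  set B : ℤ := (b₂ : ℤ) - b₁ with hB
  clear_value A B
  have hAB : ¬(A = 0 ∧ B = 0) := by
    rintro ⟨h1, h2⟩
    apply hne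
    have h3 : a₁ = a₂ := by omega
    have h4 : b₁ = b₂ := by omega
    simp [h3, h4]
  have hmod : ((A : ZMod p)) = x * (B : ZMod p) := by
    have h5 : (a₁ : ZMod p) + x * b₁ = (a₂ : ZMod p) + x * b₂ := heq
    push_cast [hA, hB]
    linear_combination h5
  have hdvd : (p : ℤ) ∣ A ^ 2 - 2 * B ^ 2 := by
    have h6 : ((A ^ 2 - 2 * B ^ 2 : ℤ) : ZMod p) = 0 := by
      push_cast
      rw [hmod]
      linear_combination (-(B : ZMod p)^2) * hx
    exact (ZMod.intCast_zmod_eq_zero_iff_dvd _ _).mp h6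
  obtain ⟨k, hk⟩ := hdvd
  have ha₁' : (a₁ : ℤ) ≤ r := by exact_mod_cast Nat.lt_succ_iff.mp ha₁
  have ha₂' : (a₂ : ℤ) ≤ r := by exact_mod_cast Nat.lt_succ_iff.mp ha₂
  have hb₁' : (b₁ : ℤ) ≤ r := by exact_mod_cast Nat.lt_succ_iff.mp hb₁
  have hb₂' : (b₂ : ℤ) ≤ r := by exact_mod_cast Nat.lt_succ_iff.mp hb₂
  have ha₁0 : (0 : ℤ) ≤ a₁ := Int.natCast_nonneg _
  have ha₂0 : (0 : ℤ) ≤ a₂ := Int.natCast_nonneg _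
  have hb₁0 : (0 : ℤ) ≤ b₁ := Int.natCast_nonneg _
  have hb₂0 : (0 : ℤ) ≤ b₂ := Int.natCast_nonneg _
  have hA2 : A ^ 2 ≤ (r : ℤ) * r := by nlinarith
  have hB2 : B ^ 2 ≤ (r : ℤ) * r := by nlinarith
  have hppos : (0 : ℤ) < p := by exact_mod_cast hp.pos
  have hrrp : (r : ℤ) * r < p := by exact_mod_cast hrp
  have hk0 : k = -1 ∨ k = 0 := by
    have h7 : -2 < k := by
      by_contra hc
      push_neg at hc
      have h9 : (p : ℤ) * k ≤ (p : ℤ) * (-2) := by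
        exact mul_le_mul_of_nonneg_left hc hppos.le
      linarith [sq_nonneg A, hB2, hrrp, hk]
    have h8' : k < 1 := by
      by_contra hc
      push_neg at hc
      have h9 : (p : ℤ) ≤ (p : ℤ) * k := le_mul_of_one_le_right hppos.le hc
      linarith [sq_nonneg B, hA2, hrrp, hk]
    omega
  rcases hk0 with hk0 | hk0
  · have hmain : (p : ℤ) = 2 * B ^ 2 - A ^ 2 := by rw [hk0] at hk; linarith
    have hBne : B ≠ 0 := by
      intro h0
      rw [h0] at hmain
      have : (0:ℤ) ≤ A ^ 2 := sq_nonneg A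
      have : (0:ℤ) ^ 2 = 0 := by norm_num
      linarith
    have hAne : A ≠ 0 := by
      intro h0
      rw [h0] at hmain
      have h2p : (2 : ℤ) ∣ p := ⟨B ^ 2, by linarith⟩
      have : (2 : ℕ) ∣ p := by exact_mod_cast h2p
      omega
    exact ⟨|B|, |A|, abs_pos.mpr hBne, abs_pos.mpr hAne, by
      rw [sq_abs, sq_abs]; exact hmain⟩
  · exfalso
    rw [hk0, mul_zero, sub_eq_zero] at hk
    exact hAB (aux_sq_eq_two_sq hk)
end
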